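/- For every real c ≥ 1, ∫_c^∞ √(1 + log t)/t² dt ≤ 2·√(1 + log c)/c. -/

import Mathlib

/-! `F t = -2 √(1 + log t) / t` tends to `0` at infinity and has derivative
`(2 √(1 + log t) - 1 / √(1 + log t)) / t²`, which dominates the integrand because
`1 / √(1 + log t) ≤ √(1 + log t)` for `t ≥ 1`; hence the integral is at most `-F c`. -/

open MeasureTheory Real Filter Topology

lemma one_le_sqrt_one_add_log {t : ℝ} (ht : 1 ≤ t) : 1 ≤ √(1 + log t) :=
  one_le_sqrt.2 (le_add_of_nonneg_right (log_nonneg ht))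

lemma le_two_mul_sub_inv_of_one_le {s : ℝ} (hs : 1 ≤ s) : s ≤ 2 * s - s⁻¹ := by
  linarith [inv_le_one_of_one_le₀ hs]

lemma hasDerivAt_neg_two_mul_sqrt_one_add_log_div {t : ℝ} (ht : 0 < t) (hL : 0 < 1 + log t) :
    HasDerivAt (fun x => -(2 * √(1 + log x) / x))
      ((2 * √(1 + log t) - (√(1 + log t))⁻¹) / t ^ 2) t := by
  have hsqrt : HasDerivAt (fun x => √(1 + log x)) (t⁻¹ / (2 * √(1 + log t))) t :=
    ((hasDerivAt_log ht.ne').const_add 1).sqrt hL.ne'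
  refine ((hsqrt.const_mul 2).div (hasDerivAt_id' t) ht.ne').neg.congr_deriv ?_
  have hs : √(1 + log t) ≠ 0 := (sqrt_pos.2 hL).ne'
  field_simp
  ring

lemma tendsto_sqrt_one_add_log_div_atTop :
    Tendsto (fun t => √(1 + log t) / t) atTop (𝓝 0) := by
  have hbound : ∀ᶠ t in atTop, √(1 + log t) / t ≤ (√t)⁻¹ := by
    filter_upwards [eventually_gt_atTop 0] with t ht
    rw [inv_eq_one_div, ← sqrt_div_self']
    gcongr
    linarith [log_le_sub_one_of_pos ht]
  have hnonneg : ∀ᶠ t in atTop, 0 ≤ √(1 + log t) / t := by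
    filter_upwards [eventually_ge_atTop 0] with t ht
    positivity
  exact squeeze_zero' hnonneg hbound (tendsto_inv_atTop_zero.comp tendsto_sqrt_atTop)

/-- For `c ≥ 1`, `∫_c^∞ √(1 + log t)/t² dt ≤ 2·√(1 + log c)/c`. -/
theorem integral_sqrt_one_add_log_div_sq_le
    (c : ℝ) (hc : 1 ≤ c) :
    (∫ t in Set.Ici c, Real.sqrt (1 + Real.log t) / t ^ 2)
      ≤ 2 * Real.sqrt (1 + Real.log c) / c := by
  set g : ℝ → ℝ := fun t => (2 * √(1 + log t) - (√(1 + log t))⁻¹) / t ^ 2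
  have hderiv : ∀ t ∈ Set.Ici c, HasDerivAt (fun x => -(2 * √(1 + log x) / x)) (g t) t :=
    fun t ht => hasDerivAt_neg_two_mul_sqrt_one_add_log_div (by linarith [hc.trans ht])
      (by linarith [log_nonneg (hc.trans ht)])
  have hle : ∀ t ∈ Set.Ioi c, √(1 + log t) / t ^ 2 ≤ g t := fun t ht =>
    div_le_div_of_nonneg_right
      (le_two_mul_sub_inv_of_one_le (one_le_sqrt_one_add_log (hc.trans ht.le))) (sq_nonneg t)
  have hf_nonneg : ∀ t, 0 ≤ √(1 + log t) / t ^ 2 := fun t => by positivity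
  have hg_nonneg : ∀ t ∈ Set.Ioi c, 0 ≤ g t := fun t ht => (hf_nonneg t).trans (hle t ht)
  have htend : Tendsto (fun x => -(2 * √(1 + log x) / x)) atTop (𝓝 0) := by
    simpa [mul_div_assoc] using (tendsto_sqrt_one_add_log_div_atTop.const_mul 2).neg
  rw [integral_Ici_eq_integral_Ioi]
  calc ∫ t in Set.Ioi c, √(1 + log t) / t ^ 2
      ≤ ∫ t in Set.Ioi c, g t :=
        integral_mono_of_nonneg (ae_of_all _ hf_nonneg)
          (integrableOn_Ioi_deriv_of_nonneg' hderiv hg_nonneg htend)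
          (ae_restrict_of_forall_mem measurableSet_Ioi hle)
    _ = 0 - -(2 * √(1 + log c) / c) :=
        integral_Ioi_of_hasDerivAt_of_nonneg' hderiv hg_nonneg htend
    _ = 2 * √(1 + log c) / c := by ring
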